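/- The matrix F₃ = [[0,0,1],[0,1,1],[1,1,1]] over ℤ/2ℤ has multiplicative order 7, and for each j = 1,…,6, the matrix F₃ʲ - E is invertible over ℤ/2ʳℤ for every r ≥ 1 (equivalently, F₃ʲ has no nonzero fixed vector in (ℤ/2ʳℤ)³). -/

import Mathlib

/-!
Reduction modulo 2 detects units of `ℤ/2ʳℤ` (a unit is just an odd residue), so through the
determinant it detects invertible matrices over `ℤ/2ʳℤ`. Over `𝔽₂` the characteristic polynomial
of `F₃` is `x³ + x + 1`, irreducible, so `𝔽₂[F₃] ≅ 𝔽₈` and `F₃` has prime order 7 in `𝔽₈ˣ`; hence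
`F₃ʲ - 1` is a nonzero element of a field for `0 < j < 7`. An invertible `F₃ʲ - 1` kills no
nonzero vector, which excludes fixed vectors.
-/

theorem ZMod.isUnit_castHom_iff {p r : ℕ} [Fact p.Prime] (hr : r ≠ 0) (x : ZMod (p ^ r)) :
    IsUnit (ZMod.castHom (dvd_pow_self p hr) (ZMod p) x) ↔ IsUnit x := by
  rw [← ZMod.natCast_zmod_val x, map_natCast, isUnit_iff_ne_zero, Ne,
    ZMod.natCast_eq_zero_iff,
    ZMod.isUnit_natCast_iff_not_dvd_pow Fact.out (Nat.pos_of_ne_zero hr)]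

theorem Matrix.isUnit_of_isUnit_mapMatrix_castHom {n : Type*} [Fintype n] [DecidableEq n]
    {p r : ℕ} [Fact p.Prime] (hr : r ≠ 0) {A : Matrix n n (ZMod (p ^ r))}
    (h : IsUnit ((ZMod.castHom (dvd_pow_self p hr) (ZMod p)).mapMatrix A)) : IsUnit A := by
  rw [Matrix.isUnit_iff_isUnit_det, ← RingHom.map_det, ZMod.isUnit_castHom_iff hr] at h
  exact A.isUnit_iff_isUnit_det.mpr h

theorem Matrix.eq_zero_of_mulVec_eq_self {n R : Type*} [Fintype n] [DecidableEq n] [CommRing R]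
    {A : Matrix n n R} (hA : IsUnit (A - 1)) {v : n → R} (hv : A.mulVec v = v) : v = 0 :=
  Matrix.mulVec_injective_of_isUnit hA <| by
    rw [Matrix.sub_mulVec, hv, Matrix.one_mulVec, sub_self, Matrix.mulVec_zero]

def matF₃ (R : Type*) [Zero R] [One R] : Matrix (Fin 3) (Fin 3) R :=
  !![0, 0, 1; 0, 1, 1; 1, 1, 1]

theorem RingHom.mapMatrix_matF₃ {R S : Type*} [Semiring R] [Semiring S] (f : R →+* S) :
    f.mapMatrix (matF₃ R) = matF₃ S := by
  ext i k
  fin_cases i <;> fin_cases k <;> simp [matF₃]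

theorem orderOf_matF₃_zmod_two : orderOf (matF₃ (ZMod 2)) = 7 :=
  haveI : Fact (Nat.Prime 7) := ⟨by norm_num⟩
  orderOf_eq_prime (by decide) (by decide)

theorem isUnit_matF₃_pow_sub_one_zmod_two {j : ℕ} (hj₁ : 1 ≤ j) (hj₆ : j ≤ 6) :
    IsUnit (matF₃ (ZMod 2) ^ j - 1) := by
  have hdet : ∀ j ∈ Finset.Icc 1 6, (matF₃ (ZMod 2) ^ j - 1).det = 1 := by decide
  rw [Matrix.isUnit_iff_isUnit_det, hdet j (Finset.mem_Icc.mpr ⟨hj₁, hj₆⟩)]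
  exact isUnit_one

theorem isUnit_matF₃_pow_sub_one {r j : ℕ} (hr : r ≠ 0) (hj₁ : 1 ≤ j) (hj₆ : j ≤ 6) :
    IsUnit (matF₃ (ZMod (2 ^ r)) ^ j - 1) := by
  apply Matrix.isUnit_of_isUnit_mapMatrix_castHom hr
  rw [map_sub, map_pow, map_one, RingHom.mapMatrix_matF₃]
  exact isUnit_matF₃_pow_sub_one_zmod_two hj₁ hj₆

theorem stmt17 (F₃ : Matrix (Fin 3) (Fin 3) (ZMod 2))
    (hF : F₃ = !![0, 0, 1; 0, 1, 1; 1, 1, 1]) :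
    orderOf F₃ = 7 ∧
    ∀ j : ℕ, 1 ≤ j → j ≤ 6 → ∀ r : ℕ, 1 ≤ r →
      IsUnit ((!![0, 0, 1; 0, 1, 1; 1, 1, 1] : Matrix (Fin 3) (Fin 3) (ZMod (2 ^ r))) ^ j - 1) ∧
      ∀ v : Fin 3 → ZMod (2 ^ r),
        ((!![0, 0, 1; 0, 1, 1; 1, 1, 1] : Matrix (Fin 3) (Fin 3) (ZMod (2 ^ r))) ^ j).mulVec v = v
          → v = 0 := by
  subst hF
  refine ⟨orderOf_matF₃_zmod_two, fun j hj₁ hj₆ r hr => ?_⟩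
  have hunit := isUnit_matF₃_pow_sub_one (r := r) (by omega) hj₁ hj₆
  exact ⟨hunit, fun v hv => Matrix.eq_zero_of_mulVec_eq_self hunit hv⟩
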